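/- arXiv:2202.09660 — 2 statements merged into one kernel-verified Lean document; each statement's English description precedes it below -/
import Mathlib

section
/- Let N be a positive integer, U ⊆ ℂ an open set, and w_1, …, w_N : U → ℂ holomorphic functions such that the values z_j(τ) := exp(i w_j(τ)) are pairwise distinct for each τ ∈ U and satisfy the system (1/z_j(τ)) z_j'(τ) = (1/(2N)) [ 1 + ∑_{k ≠ j} (z_j(τ) + z_k(τ)) / (z_j(τ) − z_k(τ)) ] for all j and all τ ∈ U. Then for every j and every τ ∈ U, w_j''(τ) = −(1/(4N²)) ∑_{k ≠ j} cos((w_j(τ) − w_k(τ))/2) / sin³((w_j(τ) − w_k(τ))/2), where cos and sin denote the complex cosine and sine. (These are the equations of motion of the trigonometric Calogero–Moser system.) -/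
/-!
Put `θ_{jk} = (w_j - w_k) / 2`. Since `e^{ia} ± e^{ib} = e^{i(a+b)/2} (2 cos, 2i sin)((a - b)/2)`,
the system for `z_j = e^{i w_j}` becomes `w_j' = (1/(2N)) (-i - ∑_{k ≠ j} cot θ_{jk})`, and
differentiating again gives `w_j'' = (1/(2N)) ∑_{k ≠ j} (w_j' - w_k') / (2 sin² θ_{jk})`.
In `w_j' - w_k'` the two terms `cot θ_{jk}` produce the `cos/sin³` sum; each remaining term, indexed
by a third particle `m`, contributes `-1/(sin θ_{jk} sin θ_{jm} sin θ_{km})`, which is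
antisymmetric in `k, m`, so these contributions cancel in pairs.
-/

open Finset Complex Filter Topology

namespace Complex

theorem cot_neg (x : ℂ) : cot (-x) = -cot x := by
  rw [cot_eq_cos_div_sin, cot_eq_cos_div_sin, cos_neg, sin_neg, div_neg]

theorem cot_sub_cot {x y : ℂ} (hx : sin x ≠ 0) (hy : sin y ≠ 0) :
    cot x - cot y = sin (y - x) / (sin x * sin y) := by
  rw [cot_eq_cos_div_sin, cot_eq_cos_div_sin, div_sub_div _ _ hx hy, sin_sub]
  ring

theorem hasDerivAt_cot {z : ℂ} (hz : sin z ≠ 0) : HasDerivAt cot (-1 / sin z ^ 2) z := by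
  have h := (hasDerivAt_cos z).div (hasDerivAt_sin z) hz
  rw [show cos / sin = cot from funext fun z => (cot_eq_cos_div_sin z).symm] at h
  refine h.congr_deriv ?_
  rw [← sin_sq_add_cos_sq z]
  ring

theorem cot_half_sub_sub_cot_half_sub_div_sin_sq {p q r : ℂ} (hpq : sin ((p - q) / 2) ≠ 0)
    (hpr : sin ((p - r) / 2) ≠ 0) (hqr : sin ((q - r) / 2) ≠ 0) :
    (cot ((p - r) / 2) - cot ((q - r) / 2)) / sin ((p - q) / 2) ^ 2 =
      -(sin ((p - q) / 2) * sin ((p - r) / 2) * sin ((q - r) / 2))⁻¹ := by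
  rw [cot_sub_cot hpr hqr, show (q - r) / 2 - (p - r) / 2 = -((p - q) / 2) by ring, sin_neg]
  field_simp

theorem exp_I_mul_sub_exp_I_mul (a b : ℂ) :
    exp (I * a) - exp (I * b) = exp (I * (a + b) / 2) * (2 * I * sin ((a - b) / 2)) := by
  rw [sin, show I * a = I * (a + b) / 2 + (a - b) / 2 * I by ring,
    show I * b = I * (a + b) / 2 + -((a - b) / 2) * I by ring, exp_add, exp_add]
  linear_combination
    exp (I * (a + b) / 2) * (exp ((a - b) / 2 * I) - exp (-((a - b) / 2) * I)) * I_sq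

theorem exp_I_mul_add_exp_I_mul (a b : ℂ) :
    exp (I * a) + exp (I * b) = exp (I * (a + b) / 2) * (2 * cos ((a - b) / 2)) := by
  rw [cos, show I * a = I * (a + b) / 2 + (a - b) / 2 * I by ring,
    show I * b = I * (a + b) / 2 + -((a - b) / 2) * I by ring, exp_add, exp_add]
  ring

theorem sin_half_sub_ne_zero {a b : ℂ} (h : exp (I * a) ≠ exp (I * b)) :
    sin ((a - b) / 2) ≠ 0 := by
  intro h0
  apply h
  rw [← sub_eq_zero, exp_I_mul_sub_exp_I_mul, h0]
  ring

/-- When `exp (I * a) = exp (I * b)`, both sides are the junk value `0`. -/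
theorem exp_I_mul_add_div_sub (a b : ℂ) :
    (exp (I * a) + exp (I * b)) / (exp (I * a) - exp (I * b)) = -I * cot ((a - b) / 2) := by
  rw [exp_I_mul_add_exp_I_mul, exp_I_mul_sub_exp_I_mul, cot_eq_cos_div_sin]
  by_cases hs : sin ((a - b) / 2) = 0
  · simp [hs]
  · rw [mul_div_mul_left _ _ (exp_ne_zero _)]
    field_simp
    linear_combination cos ((a - b) / 2) * I_sq

end Complex

theorem Finset.sum_sum_erase_eq_zero_of_antisymm {ι M : Type*} [DecidableEq ι] [AddCommMonoid M]
    (s : Finset ι) (f : ι → ι → M) (hf : ∀ x ∈ s, ∀ y ∈ s, x ≠ y → f x y + f y x = 0) :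
    ∑ x ∈ s, ∑ y ∈ s.erase x, f x y = 0 := by
  rw [← sum_finset_product' s.offDiag s _ (by simp [and_comm, ne_comm])]
  refine sum_involution (fun p _ => p.swap) (fun p hp => ?_) (fun p hp _ h => ?_)
    (fun p hp => mem_offDiag.2 ?_) (fun p _ => rfl)
  · obtain ⟨hx, hy, hxy⟩ := mem_offDiag.1 hp
    exact hf _ hx _ hy hxy
  · exact (mem_offDiag.1 hp).2.2 (congrArg Prod.fst h).symm
  · obtain ⟨hx, hy, hxy⟩ := mem_offDiag.1 hp
    exact ⟨hy, hx, hxy.symm⟩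

section Velocity

variable {ι : Type*} [Fintype ι] [DecidableEq ι]

/-- In the angle variables `w_j` with `z_j = exp (I * w_j)`, the system reads
`w_j' = cmVelocity (-I) (1 / (2 * N)) w j`. -/
noncomputable def cmVelocity (b c : ℂ) (a : ι → ℂ) (j : ι) : ℂ :=
  c * (b - ∑ k ∈ univ.erase j, cot ((a j - a k) / 2))

theorem cmVelocity_sub_cmVelocity (b c : ℂ) (a : ι → ℂ) {j k : ι} (hkj : k ≠ j) :
    cmVelocity b c a j - cmVelocity b c a k = c * (-2 * cot ((a j - a k) / 2) -
      ∑ m ∈ (univ.erase j).erase k, (cot ((a j - a m) / 2) - cot ((a k - a m) / 2))) := by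
  have hj := sum_erase_add _ (fun m => cot ((a j - a m) / 2)) (mem_erase.2 ⟨hkj, mem_univ k⟩)
  have hk := sum_erase_add _ (fun m => cot ((a k - a m) / 2)) (mem_erase.2 ⟨hkj.symm, mem_univ j⟩)
  rw [erase_right_comm] at hk
  rw [cmVelocity, cmVelocity, ← hj, ← hk, sum_sub_distrib,
    show (a k - a j) / 2 = -((a j - a k) / 2) by ring, cot_neg]
  ring

theorem sum_cmVelocity_sub_div_sin_sq (b c : ℂ) (a : ι → ℂ)
    (hs : ∀ k l, k ≠ l → sin ((a k - a l) / 2) ≠ 0) (j : ι) :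
    ∑ k ∈ univ.erase j, (cmVelocity b c a j - cmVelocity b c a k) / 2 / sin ((a j - a k) / 2) ^ 2 =
      -c * ∑ k ∈ univ.erase j, cos ((a j - a k) / 2) / sin ((a j - a k) / 2) ^ 3 := by
  have hcancel : ∑ k ∈ univ.erase j, ∑ m ∈ (univ.erase j).erase k,
      (cot ((a j - a m) / 2) - cot ((a k - a m) / 2)) / sin ((a j - a k) / 2) ^ 2 = 0 := by
    refine sum_sum_erase_eq_zero_of_antisymm _ _ fun k hk m hm hkm => ?_
    have hkj := (mem_erase.1 hk).1
    have hmj := (mem_erase.1 hm).1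
    rw [cot_half_sub_sub_cot_half_sub_div_sin_sq (hs j k hkj.symm) (hs j m hmj.symm) (hs k m hkm),
      cot_half_sub_sub_cot_half_sub_div_sin_sq (hs j m hmj.symm) (hs j k hkj.symm)
        (hs m k hkm.symm), show (a m - a k) / 2 = -((a k - a m) / 2) by ring, sin_neg]
    ring
  calc _ = ∑ k ∈ univ.erase j, (-c * (cos ((a j - a k) / 2) / sin ((a j - a k) / 2) ^ 3) -
        c / 2 * ∑ m ∈ (univ.erase j).erase k,
          (cot ((a j - a m) / 2) - cot ((a k - a m) / 2)) / sin ((a j - a k) / 2) ^ 2) := by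
        refine sum_congr rfl fun k hk => ?_
        rw [cmVelocity_sub_cmVelocity b c a (mem_erase.1 hk).1, ← sum_div, cot_eq_cos_div_sin]
        ring
    _ = _ := by rw [sum_sub_distrib, ← mul_sum, ← mul_sum, hcancel]; ring

theorem hasDerivAt_cmVelocity (b c : ℂ) {w : ι → ℂ → ℂ} {v : ι → ℂ} {τ : ℂ} {j : ι}
    (hw : ∀ k, HasDerivAt (w k) (v k) τ) (hs : ∀ k, k ≠ j → sin ((w j τ - w k τ) / 2) ≠ 0) :
    HasDerivAt (fun σ => cmVelocity b c (fun k => w k σ) j)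
      (c * ∑ k ∈ univ.erase j, (v j - v k) / 2 / sin ((w j τ - w k τ) / 2) ^ 2) τ := by
  have hterm : ∀ k ∈ univ.erase j, HasDerivAt (fun σ => cot ((w j σ - w k σ) / 2))
      (-1 / sin ((w j τ - w k τ) / 2) ^ 2 * ((v j - v k) / 2)) τ := fun k hk =>
    (hasDerivAt_cot (hs k (mem_erase.1 hk).1)).comp (h₂ := cot) τ
      (((hw j).fun_sub (hw k)).div_const 2)
  refine (((HasDerivAt.fun_sum hterm).const_sub b).const_mul c).congr_deriv ?_
  rw [← sum_neg_distrib]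
  congr 1
  refine sum_congr rfl fun k _ => ?_
  ring

theorem hasDerivAt_of_hasDerivAt_exp_I_mul (c : ℂ) {w : ι → ℂ → ℂ} {τ : ℂ} {j : ι}
    (hd : DifferentiableAt ℂ (w j) τ)
    (hode : HasDerivAt (fun σ => exp (I * w j σ)) (exp (I * w j τ) * (c *
      (1 + ∑ k ∈ univ.erase j, (exp (I * w j τ) + exp (I * w k τ)) /
        (exp (I * w j τ) - exp (I * w k τ))))) τ) :
    HasDerivAt (w j) (cmVelocity (-I) c (fun k => w k τ) j) τ := by
  have hI := mul_left_cancel₀ (exp_ne_zero _) (((hd.hasDerivAt.const_mul I).cexp).unique hode)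
  simp only [exp_I_mul_add_div_sub, ← mul_sum] at hI
  refine hd.hasDerivAt.congr_deriv ?_
  rw [cmVelocity]
  linear_combination
    (-I) * hI + (deriv (w j) τ + c * ∑ k ∈ univ.erase j, cot ((w j τ - w k τ) / 2)) * I_sq

end Velocity

theorem stmt7_general (N : ℕ) (U : Set ℂ) (hU : IsOpen U)
    (w : Fin N → ℂ → ℂ)
    (hdiff : ∀ j, DifferentiableOn ℂ (w j) U)
    (hdist : ∀ τ ∈ U, ∀ j k : Fin N, j ≠ k →
      Complex.exp (Complex.I * w j τ) ≠ Complex.exp (Complex.I * w k τ))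
    (hode : ∀ j : Fin N, ∀ τ ∈ U,
      HasDerivAt (fun σ => Complex.exp (Complex.I * w j σ))
        (Complex.exp (Complex.I * w j τ) * ((1 / (2 * (N : ℂ))) *
          (1 + ∑ k ∈ Finset.univ.erase j,
            (Complex.exp (Complex.I * w j τ) + Complex.exp (Complex.I * w k τ)) /
              (Complex.exp (Complex.I * w j τ) - Complex.exp (Complex.I * w k τ))))) τ)
    (j : Fin N) (τ : ℂ) (hτ : τ ∈ U) :
    HasDerivAt (deriv (w j))
      (-(1 / (4 * (N : ℂ) ^ 2)) * ∑ k ∈ Finset.univ.erase j,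
        Complex.cos ((w j τ - w k τ) / 2) / Complex.sin ((w j τ - w k τ) / 2) ^ 3) τ := by
  have hw : ∀ k, ∀ σ ∈ U, HasDerivAt (w k) (cmVelocity (-I) (1 / (2 * N)) (fun m => w m σ) k) σ :=
    fun k σ hσ => hasDerivAt_of_hasDerivAt_exp_I_mul _
      ((hdiff k).differentiableAt (hU.mem_nhds hσ)) (hode k σ hσ)
  have hs : ∀ k l, k ≠ l → sin ((w k τ - w l τ) / 2) ≠ 0 := fun k l hkl =>
    sin_half_sub_ne_zero (hdist τ hτ k l hkl)
  have hderiv : deriv (w j) =ᶠ[𝓝 τ] fun σ => cmVelocity (-I) (1 / (2 * N)) (fun m => w m σ) j :=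
    eventually_of_mem (hU.mem_nhds hτ) fun σ hσ => (hw j σ hσ).deriv
  have h := (hasDerivAt_cmVelocity (-I) (1 / (2 * N)) (fun k => hw k τ hτ)
    fun k hkj => hs j k hkj.symm).congr_of_eventuallyEq hderiv
  rw [sum_cmVelocity_sub_div_sin_sq _ _ _ hs] at h
  exact h.congr_deriv (by ring)

theorem stmt7 (N : ℕ) (hN : 0 < N) (U : Set ℂ) (hU : IsOpen U)
    (w : Fin N → ℂ → ℂ)
    (hdiff : ∀ j, DifferentiableOn ℂ (w j) U)
    (hdist : ∀ τ ∈ U, ∀ j k : Fin N, j ≠ k →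
      Complex.exp (Complex.I * w j τ) ≠ Complex.exp (Complex.I * w k τ))
    (hode : ∀ j : Fin N, ∀ τ ∈ U,
      HasDerivAt (fun σ => Complex.exp (Complex.I * w j σ))
        (Complex.exp (Complex.I * w j τ) * ((1 / (2 * (N : ℂ))) *
          (1 + ∑ k ∈ Finset.univ.erase j,
            (Complex.exp (Complex.I * w j τ) + Complex.exp (Complex.I * w k τ)) /
              (Complex.exp (Complex.I * w j τ) - Complex.exp (Complex.I * w k τ))))) τ)
    (j : Fin N) (τ : ℂ) (hτ : τ ∈ U) :
    HasDerivAt (deriv (w j))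
      (-(1 / (4 * (N : ℂ) ^ 2)) * ∑ k ∈ Finset.univ.erase j,
        Complex.cos ((w j τ - w k τ) / 2) / Complex.sin ((w j τ - w k τ) / 2) ^ 3) τ :=
  stmt7_general N U hU w hdiff hdist hode j τ hτ
end

section
/- Let N be a positive integer, U ⊆ ℂ a connected open set, and z_1, …, z_N : U → ℂ holomorphic functions whose values are nonzero and pairwise distinct for each τ ∈ U and which satisfy (1/z_j(τ)) z_j'(τ) = (1/(2N)) [ 1 + ∑_{k ≠ j} (z_j(τ) + z_k(τ)) / (z_j(τ) − z_k(τ)) ] for all j and all τ ∈ U. Define q_τ(z) = ∏_{j=1}^{N} (z − z_j(τ)), a monic polynomial of degree N. Then for every τ ∈ U and every z ∈ ℂ, the complex derivative of the map τ ↦ q_τ(z) exists and equals −(1/(2N)) ( z² q_τ''(z) − (N−2) z q_τ'(z) − N q_τ(z) ), where primes denote derivatives in z. -/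
/-!
Write `q(u) = ∏ⱼ (u - zⱼ)` and `Pⱼ(u) = ∏_{k ≠ j} (u - zₖ)`. By the product rule `∂_τ q = -∑ⱼ zⱼ' Pⱼ`,
`q' = ∑ⱼ Pⱼ` and `q'' = ∑_{j ≠ k} Q_{jk}` with `Q_{jk} = ∏_{l ≠ j, k} (u - z_l)`, so after inserting the
ODE the claim is an algebraic identity in the roots. The diagonal part uses `zⱼ Pⱼ = u Pⱼ - q`; the
interaction terms are summed in symmetric pairs `{j, k}`, where `(zⱼ - zₖ)` cancels and
`zⱼ (zⱼ + zₖ)/(zⱼ - zₖ) Pⱼ + zₖ (zₖ + zⱼ)/(zₖ - zⱼ) Pₖ = 2u² Q_{jk} - u Pⱼ - u Pₖ`.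
-/

open Finset

section Derivatives

variable {𝕜 ι : Type*} [NontriviallyNormedField 𝕜] [DecidableEq ι] (s : Finset ι) (c : ι → 𝕜)

theorem hasDerivAt_prod_sub (u : 𝕜) :
    HasDerivAt (fun v => ∏ j ∈ s, (v - c j)) (∑ j ∈ s, ∏ k ∈ s.erase j, (u - c k)) u := by
  simpa using HasDerivAt.fun_finsetProd (f' := fun _ => (1 : 𝕜))
    fun j _ => (hasDerivAt_id u).sub_const (c j)

theorem deriv_prod_sub :
    deriv (fun v => ∏ j ∈ s, (v - c j)) = fun u => ∑ j ∈ s, ∏ k ∈ s.erase j, (u - c k) :=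
  funext fun u => (hasDerivAt_prod_sub s c u).deriv

theorem deriv_deriv_prod_sub (u : 𝕜) :
    deriv (deriv fun v => ∏ j ∈ s, (v - c j)) u
      = ∑ j ∈ s, ∑ k ∈ s.erase j, ∏ l ∈ (s.erase j).erase k, (u - c l) := by
  rw [deriv_prod_sub]
  exact (HasDerivAt.fun_sum fun j _ => hasDerivAt_prod_sub (s.erase j) c u).deriv

end Derivatives

theorem Finset.sum_sum_erase_comm {ι M : Type*} [Fintype ι] [DecidableEq ι] [AddCommMonoid M]
    (f : ι → ι → M) :
    ∑ j, ∑ k ∈ univ.erase j, f j k = ∑ j, ∑ k ∈ univ.erase j, f k j :=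
  sum_comm' fun _ _ => by simp [ne_comm]

section RootIdentity

variable {K ι : Type*} [Field K] [Fintype ι] [DecidableEq ι] (c : ι → K) (w : K)

theorem sum_mul_prod_erase_sub :
    ∑ j, c j * ∏ k ∈ univ.erase j, (w - c k)
      = w * ∑ j, ∏ k ∈ univ.erase j, (w - c k) - Fintype.card ι * ∏ j, (w - c j) := by
  have hdiag (j : ι) : c j * ∏ k ∈ univ.erase j, (w - c k)
      = w * ∏ k ∈ univ.erase j, (w - c k) - ∏ j, (w - c j) := by
    rw [← mul_prod_erase univ (fun k => w - c k) (mem_univ j)]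
    ring
  simp [hdiag, sum_sub_distrib, mul_sum]

theorem mul_div_sub_mul_prod_erase_add_swap {j k : ι} (hc : c j ≠ c k) :
    c j * ((c j + c k) / (c j - c k)) * ∏ l ∈ univ.erase j, (w - c l)
      + c k * ((c k + c j) / (c k - c j)) * ∏ l ∈ univ.erase k, (w - c l)
      = 2 * w ^ 2 * ∏ l ∈ (univ.erase j).erase k, (w - c l)
        - w * ∏ l ∈ univ.erase j, (w - c l) - w * ∏ l ∈ univ.erase k, (w - c l) := by
  have hjk : j ≠ k := fun h => hc (congrArg c h)
  have hk : k ∈ univ.erase j := mem_erase.2 ⟨hjk.symm, mem_univ k⟩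
  have hj : j ∈ univ.erase k := mem_erase.2 ⟨hjk, mem_univ j⟩
  rw [← mul_prod_erase _ (fun l => w - c l) hk, ← mul_prod_erase _ (fun l => w - c l) hj,
    erase_right_comm]
  have hjk' : c j - c k ≠ 0 := sub_ne_zero.2 hc
  have hkj' : c k - c j ≠ 0 := sub_ne_zero.2 hc.symm
  field_simp
  ring

theorem sum_sum_erase_mul_div_sub_mul_prod_erase [NeZero (2 : K)] (hc : Function.Injective c) :
    ∑ j, ∑ k ∈ univ.erase j, c j * ((c j + c k) / (c j - c k)) * ∏ l ∈ univ.erase j, (w - c l)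
      = w ^ 2 * ∑ j, ∑ k ∈ univ.erase j, ∏ l ∈ (univ.erase j).erase k, (w - c l)
        - (Fintype.card ι - 1) * w * ∑ j, ∏ k ∈ univ.erase j, (w - c k) := by
  set P : ι → K := fun j => ∏ k ∈ univ.erase j, (w - c k)
  have hcard (j : ι) : ((univ.erase j).card : K) = Fintype.card ι - 1 := by
    rw [card_erase_of_mem (mem_univ j), card_univ,
      Nat.cast_sub (Fintype.card_pos_iff.2 ⟨j⟩), Nat.cast_one]
  have hsym (g : ι → K) : ∑ j, ∑ k ∈ univ.erase j, g k = (Fintype.card ι - 1) * ∑ j, g j := by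
    rw [sum_sum_erase_comm fun _ k => g k]
    simp only [sum_const, nsmul_eq_mul, hcard, mul_sum]
  apply mul_left_cancel₀ (two_ne_zero (α := K))
  calc 2 * ∑ j, ∑ k ∈ univ.erase j, c j * ((c j + c k) / (c j - c k)) * P j
      = ∑ j, ∑ k ∈ univ.erase j,
          (c j * ((c j + c k) / (c j - c k)) * P j + c k * ((c k + c j) / (c k - c j)) * P k) := by
        rw [two_mul]
        nth_rw 2 [sum_sum_erase_comm]
        simp only [sum_add_distrib]
    _ = ∑ j, ∑ k ∈ univ.erase j,
          (2 * w ^ 2 * ∏ l ∈ (univ.erase j).erase k, (w - c l) - w * P j - w * P k) :=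
        sum_congr rfl fun j _ => sum_congr rfl fun k hk =>
          mul_div_sub_mul_prod_erase_add_swap c w (hc.ne (ne_of_mem_erase hk).symm)
    _ = _ := by
        simp only [sum_sub_distrib]
        rw [hsym fun k => w * P k]
        simp only [sum_const, nsmul_eq_mul, hcard, ← mul_sum]
        ring

theorem sum_mul_one_add_sum_div_mul_prod_erase [NeZero (2 : K)] (hc : Function.Injective c) :
    ∑ j, c j * (1 + ∑ k ∈ univ.erase j, (c j + c k) / (c j - c k)) * ∏ k ∈ univ.erase j, (w - c k)
      = w ^ 2 * ∑ j, ∑ k ∈ univ.erase j, ∏ l ∈ (univ.erase j).erase k, (w - c l)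
        - (Fintype.card ι - 2) * w * ∑ j, ∏ k ∈ univ.erase j, (w - c k)
        - Fintype.card ι * ∏ j, (w - c j) := by
  have hsplit (j : ι) :
      c j * (1 + ∑ k ∈ univ.erase j, (c j + c k) / (c j - c k)) * ∏ k ∈ univ.erase j, (w - c k)
        = c j * ∏ k ∈ univ.erase j, (w - c k)
          + ∑ k ∈ univ.erase j,
              c j * ((c j + c k) / (c j - c k)) * ∏ l ∈ univ.erase j, (w - c l) := by
    rw [mul_add, mul_one, add_mul, mul_sum, sum_mul]
  rw [sum_congr rfl fun j _ => hsplit j, sum_add_distrib, sum_mul_prod_erase_sub,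
    sum_sum_erase_mul_div_sub_mul_prod_erase c w hc]
  ring

end RootIdentity

theorem stmt18_general (N : ℕ) (U : Set ℂ)
    (z : Fin N → ℂ → ℂ)
    (hdist : ∀ τ ∈ U, ∀ j k : Fin N, j ≠ k → z j τ ≠ z k τ)
    (hode : ∀ j : Fin N, ∀ τ ∈ U,
      HasDerivAt (z j)
        (z j τ * ((1 / (2 * (N : ℂ))) *
          (1 + ∑ k ∈ Finset.univ.erase j, (z j τ + z k τ) / (z j τ - z k τ)))) τ)
    (τ : ℂ) (hτ : τ ∈ U) (w : ℂ) :
    HasDerivAt (fun σ => ∏ j, (w - z j σ))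
      (-(1 / (2 * (N : ℂ))) *
        (w ^ 2 * deriv (deriv (fun u => ∏ j, (u - z j τ))) w
          - ((N : ℂ) - 2) * w * deriv (fun u => ∏ j, (u - z j τ)) w
          - (N : ℂ) * ∏ j, (w - z j τ))) τ := by
  have hinj : Function.Injective fun j => z j τ := fun j k h =>
    by_contra fun hjk => hdist τ hτ j k hjk h
  have hq := HasDerivAt.fun_finsetProd (u := univ) fun j _ => (hode j τ hτ).const_sub w
  have hroots := sum_mul_one_add_sum_div_mul_prod_erase _ w hinj
  rw [Fintype.card_fin] at hroots
  rw [deriv_deriv_prod_sub, (hasDerivAt_prod_sub _ _ w).deriv, ← hroots]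
  refine hq.congr_deriv ?_
  rw [mul_sum]
  exact sum_congr rfl fun j _ => by rw [smul_eq_mul]; ring

theorem stmt18 (N : ℕ) (hN : 0 < N) (U : Set ℂ) (hU : IsOpen U)
    (hconn : IsConnected U)
    (z : Fin N → ℂ → ℂ)
    (hne : ∀ τ ∈ U, ∀ j : Fin N, z j τ ≠ 0)
    (hdist : ∀ τ ∈ U, ∀ j k : Fin N, j ≠ k → z j τ ≠ z k τ)
    (hode : ∀ j : Fin N, ∀ τ ∈ U,
      HasDerivAt (z j)
        (z j τ * ((1 / (2 * (N : ℂ))) *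
          (1 + ∑ k ∈ Finset.univ.erase j, (z j τ + z k τ) / (z j τ - z k τ)))) τ)
    (τ : ℂ) (hτ : τ ∈ U) (w : ℂ) :
    HasDerivAt (fun σ => ∏ j, (w - z j σ))
      (-(1 / (2 * (N : ℂ))) *
        (w ^ 2 * deriv (deriv (fun u => ∏ j, (u - z j τ))) w
          - ((N : ℂ) - 2) * w * deriv (fun u => ∏ j, (u - z j τ)) w
          - (N : ℂ) * ∏ j, (w - z j τ))) τ :=
  stmt18_general N U z hdist hode τ hτ w
end
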